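/- Let m̃ be the Fourier transform of the unit-mass surface measure of the sphere of radius R in ℝ^N, N ≥ 3. For every C > 1 there exists c > 0 such that for all ζ with 2πR|ζ| ≤ C and all r ∈ [1,2], |m̃(rζ)| ≤ e^{-c(2πR|ζ|)²}. -/

import Mathlib

/-! With `w t = (1 - t²)^((N-3)/2)` and `a = 2πR|ζ|`, the evenness of `w` makes `m̃` real,
`m̃(ζ) = K ∫₋₁¹ cos (a t) w t dt`, and the Gamma factor `K` is exactly `(∫₋₁¹ w)⁻¹` (a Wallis
integral). On `[0, δ]` with `δ = 1/(2C)` every `a ≤ 2C` keeps `a t ≤ 1 ≤ π/2`, where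
`|cos x| ≤ 1 - 2x²/π²`; hence `|m̃(ζ)| ≤ 1 - (2a²/π²) K ∫₀^δ t² w ≤ exp (-c a²)` whenever
`a ≤ 2C`, and this covers `rζ` for `r ∈ [1, 2]` since `|rζ| ≥ |ζ|`. -/

open MeasureTheory Real intervalIntegral

/-- The Fourier transform of the unit-mass surface measure of the sphere of radius `R`
in `ℝ^N`, given by `m̃(ζ) = (Γ(N/2)/(Γ((N-1)/2)√π)) ∫_{-1}^1 e^{2πiR|ζ|t}(1-t²)^{(N-3)/2} dt`. -/
noncomputable def sphereFT (N : ℕ) (R : ℝ) (ζ : EuclideanSpace ℝ (Fin N)) : ℂ :=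
  ((Real.Gamma ((N:ℝ)/2) / (Real.Gamma (((N:ℝ) - 1)/2) * Real.sqrt π)) : ℝ) *
    ∫ t in (-1:ℝ)..1,
      Complex.exp (2 * (π:ℂ) * Complex.I * (R * ‖ζ‖ * t : ℝ)) *
        ((1 - t^2 : ℝ) ^ (((N:ℝ) - 3)/2) : ℝ)

theorem integral_eq_zero_of_odd {f : ℝ → ℝ} (hf : ∀ x, f (-x) = -f x) (b : ℝ) :
    ∫ x in -b..b, f x = 0 := by
  have h := integral_comp_neg (a := -b) (b := b) f
  simp only [neg_neg, hf, intervalIntegral.integral_neg] at h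
  linarith

theorem integral_cexp_mul_I_mul_of_even {w : ℝ → ℝ} (hw_even : ∀ t, w (-t) = w t) {b : ℝ}
    (hw : IntervalIntegrable w volume (-b) b) (a : ℝ) :
    ∫ t in -b..b, Complex.exp (↑(a * t) * Complex.I) * ↑(w t)
      = ↑(∫ t in -b..b, cos (a * t) * w t) := by
  have hcos : IntervalIntegrable (fun t => ((cos (a * t) * w t : ℝ) : ℂ)) volume (-b) b := by
    have h := hw.continuousOn_mul (g := fun t => cos (a * t)) (by fun_prop)
    exact ⟨h.1.ofReal, h.2.ofReal⟩
  have hsin : IntervalIntegrable (fun t => ((sin (a * t) * w t : ℝ) : ℂ)) volume (-b) b := by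
    have h := hw.continuousOn_mul (g := fun t => sin (a * t)) (by fun_prop)
    exact ⟨h.1.ofReal, h.2.ofReal⟩
  have hsin_odd : ∫ t in -b..b, sin (a * t) * w t = 0 :=
    integral_eq_zero_of_odd (fun t => by rw [hw_even, mul_neg, sin_neg, neg_mul]) b
  calc ∫ t in -b..b, Complex.exp (↑(a * t) * Complex.I) * ↑(w t)
      = ∫ t in -b..b, (↑(cos (a * t) * w t) + ↑(sin (a * t) * w t) * Complex.I : ℂ) := by
        refine integral_congr fun t _ => ?_
        rw [Complex.exp_mul_I]
        push_cast
        ring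
    _ = ↑(∫ t in -b..b, cos (a * t) * w t) := by
        rw [intervalIntegral.integral_add hcos (hsin.mul_const _),
          intervalIntegral.integral_mul_const,
          integral_ofReal, integral_ofReal, hsin_odd]
        simp

theorem abs_cos_le_one_sub_mul_sq {x : ℝ} (hx : |x| ≤ π / 2) :
    |cos x| ≤ 1 - 2 / π ^ 2 * x ^ 2 := by
  rw [abs_of_nonneg (cos_nonneg_of_mem_Icc (abs_le.mp hx))]
  exact cos_le_one_sub_mul_cos_sq (hx.trans (by linarith [pi_pos]))

theorem abs_integral_cos_mul_le {w : ℝ → ℝ} (hw : IntervalIntegrable w volume (-1) 1)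
    (hw_nonneg : ∀ t ∈ Set.Icc (-1) 1, 0 ≤ w t) {a δ : ℝ} (hδ0 : 0 ≤ δ) (hδ1 : δ ≤ 1)
    (haδ : |a| * δ ≤ π / 2) :
    |∫ t in (-1)..1, cos (a * t) * w t|
      ≤ (∫ t in (-1)..1, w t) - 2 / π ^ 2 * a ^ 2 * ∫ t in 0..δ, t ^ 2 * w t := by
  set g : ℝ → ℝ := fun t => (1 - |cos (a * t)|) * w t
  have hg : IntervalIntegrable g volume (-1) 1 := hw.continuousOn_mul (by fun_prop)
  have hg_nonneg : ∀ t ∈ Set.Icc (-1) 1, 0 ≤ g t := fun t ht =>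
    mul_nonneg (by linarith [abs_cos_le_one (a * t)]) (hw_nonneg t ht)
  have hsub : Set.Icc 0 δ ⊆ Set.Icc (-1) 1 := Set.Icc_subset_Icc (by norm_num) hδ1
  have hw' : IntervalIntegrable w volume 0 δ :=
    hw.mono_set (by rwa [Set.uIcc_of_le hδ0, Set.uIcc_of_le (by norm_num)])
  have hg_small : ∫ t in 0..δ, 2 / π ^ 2 * a ^ 2 * (t ^ 2 * w t) ≤ ∫ t in 0..δ, g t := by
    refine integral_mono_on hδ0 ((hw'.continuousOn_mul (by fun_prop)).const_mul _)
      (hg.mono_set ?_) fun t ht => ?_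
    · rwa [Set.uIcc_of_le hδ0, Set.uIcc_of_le (by norm_num)]
    have hat : |a * t| ≤ π / 2 := by
      rw [abs_mul, abs_of_nonneg ht.1]
      exact (mul_le_mul_of_nonneg_left ht.2 (abs_nonneg a)).trans haδ
    have := abs_cos_le_one_sub_mul_sq hat
    have := hw_nonneg t (hsub ht)
    simp only [g]
    nlinarith
  have hg_mono : ∫ t in 0..δ, g t ≤ ∫ t in (-1)..1, g t :=
    integral_mono_interval (by norm_num) hδ0 hδ1
      ((ae_restrict_iff' measurableSet_Ioc).mpr (ae_of_all _ fun t ht =>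
        hg_nonneg t (Set.Ioc_subset_Icc_self ht)))
      hg
  calc |∫ t in (-1)..1, cos (a * t) * w t|
      ≤ ∫ t in (-1)..1, |cos (a * t) * w t| := abs_integral_le_integral_abs (by norm_num)
    _ = ∫ t in (-1)..1, (w t - g t) := by
        refine integral_congr fun t ht => ?_
        rw [Set.uIcc_of_le (by norm_num)] at ht
        simp only [g, abs_mul, abs_of_nonneg (hw_nonneg t ht)]
        ring
    _ = (∫ t in (-1)..1, w t) - ∫ t in (-1)..1, g t := integral_sub hw hg
    _ ≤ (∫ t in (-1)..1, w t) - 2 / π ^ 2 * a ^ 2 * ∫ t in 0..δ, t ^ 2 * w t := by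
        rw [← intervalIntegral.integral_const_mul]
        linarith

theorem integral_cos_pow_eq_sqrt_pi_mul_Gamma_div (n : ℕ) :
    ∫ x in -(π / 2)..π / 2, cos x ^ n
      = √π * Gamma (((n : ℝ) + 1) / 2) / Gamma (((n : ℝ) + 2) / 2) := by
  induction n using Nat.twoStepInduction with
  | zero =>
    norm_num [Gamma_one_half_eq, mul_self_sqrt pi_pos.le]
  | one =>
    norm_num
    rw [show (3 : ℝ) / 2 = 1 / 2 + 1 by norm_num, Gamma_add_one (by norm_num), Gamma_one_half_eq]
    field_simp [(sqrt_pos.mpr pi_pos).ne']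
  | more n ih _ =>
    have h := integral_cos_pow (a := -(π / 2)) (b := π / 2) n
    simp only [cos_neg, cos_pi_div_two, zero_pow n.succ_ne_zero, zero_mul, sub_self,
      zero_div, zero_add] at h
    rw [h, ih]
    have e1 : ((n : ℝ) + 2 + 1) / 2 = ((n : ℝ) + 1) / 2 + 1 := by ring
    have e2 : ((n : ℝ) + 2 + 2) / 2 = ((n : ℝ) + 2) / 2 + 1 := by ring
    push_cast
    rw [e1, e2, Gamma_add_one (by positivity), Gamma_add_one (by positivity)]
    have : 0 < Gamma (((n : ℝ) + 2) / 2) := Gamma_pos_of_pos (by positivity)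
    field_simp

theorem continuous_one_sub_sq_rpow {q : ℝ} (hq : 0 ≤ q) :
    Continuous fun t : ℝ => (1 - t ^ 2) ^ q :=
  (continuous_rpow_const hq).comp (by fun_prop)

theorem integral_one_sub_sq_rpow_eq_integral_cos_pow (n : ℕ) (hn : 1 ≤ n) :
    ∫ x in (-1 : ℝ)..1, (1 - x ^ 2) ^ (((n : ℝ) - 1) / 2)
      = ∫ x in -(π / 2)..π / 2, cos x ^ n := by
  have hq : (0 : ℝ) ≤ ((n : ℝ) - 1) / 2 := by
    have : (1 : ℝ) ≤ n := by exact_mod_cast hn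
    linarith
  calc ∫ x in (-1 : ℝ)..1, (1 - x ^ 2) ^ (((n : ℝ) - 1) / 2)
      = ∫ x in sin (-(π / 2))..sin (π / 2), (1 - x ^ 2) ^ (((n : ℝ) - 1) / 2) := by
        rw [sin_neg, sin_pi_div_two]
    _ = ∫ x in -(π / 2)..π / 2, (1 - sin x ^ 2) ^ (((n : ℝ) - 1) / 2) * cos x :=
        (integral_comp_mul_deriv (fun x _ => hasDerivAt_sin x) continuousOn_cos
          (continuous_one_sub_sq_rpow hq)).symm
    _ = ∫ x in -(π / 2)..π / 2, cos x ^ n := by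
        refine integral_congr fun x hx => ?_
        rw [Set.uIcc_of_le (by linarith [pi_pos])] at hx
        have hcos : 0 ≤ cos x := cos_nonneg_of_mem_Icc hx
        rw [← cos_sq', ← rpow_natCast (cos x) 2, ← rpow_mul hcos,
          show ((2 : ℕ) : ℝ) * (((n : ℝ) - 1) / 2) = ((n - 1 : ℕ) : ℝ) by
            rw [Nat.cast_sub hn]; push_cast; ring,
          rpow_natCast, ← pow_succ, Nat.sub_add_cancel hn]

theorem integral_one_sub_sq_rpow_eq_sqrt_pi_mul_Gamma_div (N : ℕ) (hN : 3 ≤ N) :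
    ∫ x in (-1 : ℝ)..1, (1 - x ^ 2) ^ (((N : ℝ) - 3) / 2)
      = √π * Gamma (((N : ℝ) - 1) / 2) / Gamma ((N : ℝ) / 2) := by
  have hcast : ((N - 2 : ℕ) : ℝ) = (N : ℝ) - 2 := by
    rw [Nat.cast_sub (by omega)]; norm_num
  rw [show ((N : ℝ) - 3) / 2 = (((N - 2 : ℕ) : ℝ) - 1) / 2 by rw [hcast]; ring,
    integral_one_sub_sq_rpow_eq_integral_cos_pow (N - 2) (by omega),
    integral_cos_pow_eq_sqrt_pi_mul_Gamma_div, hcast]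
  ring_nf

theorem integral_sq_mul_one_sub_sq_rpow_pos {q : ℝ} (hq : 0 ≤ q) {δ : ℝ} (hδ0 : 0 < δ)
    (hδ1 : δ ≤ 1) : 0 < ∫ t in 0..δ, t ^ 2 * (1 - t ^ 2) ^ q := by
  refine intervalIntegral_pos_of_pos_on
    (((continuous_pow 2).mul (continuous_one_sub_sq_rpow hq)).intervalIntegrable _ _)
    (fun t ht => ?_) hδ0
  have : t ^ 2 < 1 := by nlinarith [ht.1, ht.2]
  have := rpow_pos_of_pos (sub_pos.mpr this) q
  have := ht.1
  positivity

theorem sub_three_div_two_nonneg {N : ℕ} (hN : 3 ≤ N) : (0 : ℝ) ≤ ((N : ℝ) - 3) / 2 := by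
  have : (3 : ℝ) ≤ N := by exact_mod_cast hN
  linarith

noncomputable def sphereFTConst (N : ℕ) : ℝ :=
  Gamma ((N : ℝ) / 2) / (Gamma (((N : ℝ) - 1) / 2) * √π)

theorem sphereFTConst_pos {N : ℕ} (hN : 3 ≤ N) : 0 < sphereFTConst N := by
  have hN' : (3 : ℝ) ≤ N := by exact_mod_cast hN
  have := Gamma_pos_of_pos (show 0 < (N : ℝ) / 2 by linarith)
  have := Gamma_pos_of_pos (show 0 < ((N : ℝ) - 1) / 2 by linarith)
  have := sqrt_pos.mpr pi_pos
  unfold sphereFTConst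
  positivity

theorem sphereFTConst_mul_integral_eq_one {N : ℕ} (hN : 3 ≤ N) :
    sphereFTConst N * ∫ t in (-1 : ℝ)..1, (1 - t ^ 2) ^ (((N : ℝ) - 3) / 2) = 1 := by
  have hN' : (3 : ℝ) ≤ N := by exact_mod_cast hN
  have := Gamma_pos_of_pos (show 0 < ((N : ℝ) - 1) / 2 by linarith)
  have := sqrt_pos.mpr pi_pos
  rw [integral_one_sub_sq_rpow_eq_sqrt_pi_mul_Gamma_div N hN, sphereFTConst]
  field_simp

theorem sphereFT_eq_ofReal {N : ℕ} (hN : 3 ≤ N) (R : ℝ) (ζ : EuclideanSpace ℝ (Fin N)) :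
    sphereFT N R ζ = ↑(sphereFTConst N *
      ∫ t in (-1 : ℝ)..1, cos (2 * π * R * ‖ζ‖ * t) * (1 - t ^ 2) ^ (((N : ℝ) - 3) / 2)) := by
  have hq := sub_three_div_two_nonneg hN
  rw [sphereFT, sphereFTConst, Complex.ofReal_mul, ← integral_cexp_mul_I_mul_of_even
    (fun t => by rw [neg_sq]) ((continuous_one_sub_sq_rpow hq).intervalIntegrable _ _)]
  congr 2
  funext t
  push_cast
  ring_nf

theorem norm_sphereFT_le {N : ℕ} (hN : 3 ≤ N) (R : ℝ) (ζ : EuclideanSpace ℝ (Fin N)) {δ : ℝ}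
    (hδ0 : 0 ≤ δ) (hδ1 : δ ≤ 1) (hζδ : |2 * π * R * ‖ζ‖| * δ ≤ π / 2) :
    ‖sphereFT N R ζ‖ ≤ 1 - 2 / π ^ 2 * sphereFTConst N *
      (∫ t in 0..δ, t ^ 2 * (1 - t ^ 2) ^ (((N : ℝ) - 3) / 2)) * (2 * π * R * ‖ζ‖) ^ 2 := by
  have hq := sub_three_div_two_nonneg hN
  have hK := sphereFTConst_pos hN
  have hbound := abs_integral_cos_mul_le
    ((continuous_one_sub_sq_rpow hq).intervalIntegrable (-1) 1)
    (fun t ht => rpow_nonneg (by nlinarith [ht.1, ht.2]) _) hδ0 hδ1 hζδ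
  rw [sphereFT_eq_ofReal hN, Complex.norm_real, norm_mul, norm_of_nonneg hK.le,
    Real.norm_eq_abs]
  calc _ ≤ sphereFTConst N * ((∫ t in (-1 : ℝ)..1, (1 - t ^ 2) ^ (((N : ℝ) - 3) / 2)) -
          2 / π ^ 2 * (2 * π * R * ‖ζ‖) ^ 2 *
            ∫ t in 0..δ, t ^ 2 * (1 - t ^ 2) ^ (((N : ℝ) - 3) / 2)) := by gcongr
    _ = _ := by rw [mul_sub, sphereFTConst_mul_integral_eq_one hN]; ring

theorem sphereFT_gaussian_bound_general (N : ℕ) (hN : 3 ≤ N) (R : ℝ) (hR : 0 < R)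
    (C : ℝ) (hC : 1 < C) :
    ∃ c : ℝ, 0 < c ∧
      ∀ ζ : EuclideanSpace ℝ (Fin N), 2 * π * R * ‖ζ‖ ≤ C →
        ∀ r : ℝ, 1 ≤ r → r ≤ 2 →
          ‖sphereFT N R (r • ζ)‖ ≤ Real.exp (-c * (2 * π * R * ‖ζ‖) ^ 2) := by
  have hq := sub_three_div_two_nonneg hN
  set δ : ℝ := 1 / (2 * C)
  have hδ0 : 0 < δ := by positivity
  have hδ1 : δ ≤ 1 := by rw [div_le_one (by linarith)]; linarith
  set J : ℝ := ∫ t in 0..δ, t ^ 2 * (1 - t ^ 2) ^ (((N : ℝ) - 3) / 2)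
  have hJ : 0 < J := integral_sq_mul_one_sub_sq_rpow_pos hq hδ0 hδ1
  have hK := sphereFTConst_pos hN
  refine ⟨2 / π ^ 2 * sphereFTConst N * J, by positivity, fun ζ hζ r hr1 hr2 => ?_⟩
  set s := 2 * π * R * ‖ζ‖
  have hs : 0 ≤ s := by positivity
  have ha : 2 * π * R * ‖r • ζ‖ = r * s := by
    rw [norm_smul, norm_of_nonneg (by linarith)]; ring
  have haδ : |2 * π * R * ‖r • ζ‖| * δ ≤ π / 2 := by
    rw [ha, abs_of_nonneg (by positivity)]
    calc r * s * δ ≤ 2 * C * δ := by gcongr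
      _ = 1 := by simp only [δ]; field_simp
      _ ≤ π / 2 := by linarith [pi_gt_three]
  calc ‖sphereFT N R (r • ζ)‖ ≤ 1 - 2 / π ^ 2 * sphereFTConst N * J * (r * s) ^ 2 := by
        simpa only [ha] using norm_sphereFT_le hN R (r • ζ) hδ0.le hδ1 haδ
    _ ≤ 1 - 2 / π ^ 2 * sphereFTConst N * J * s ^ 2 := by gcongr; nlinarith
    _ ≤ exp (-(2 / π ^ 2 * sphereFTConst N * J) * s ^ 2) := by
        rw [neg_mul]; exact one_sub_le_exp_neg _

/-- Gaussian bound in bounded frequency ranges: for every `C > 1` there is `c > 0` with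
`|m̃(rζ)| ≤ e^{-c(2πR|ζ|)²}` whenever `2πR|ζ| ≤ C` and `1 ≤ r ≤ 2`. -/
theorem sphereFT_gaussian_bound (N : ℕ) (hN : 3 ≤ N) (R : ℝ) (hR : 0 < R)
    (hRsurf : R ^ (N - 1) = Real.Gamma ((N:ℝ)/2) / (2 * (π : ℝ) ^ ((N:ℝ)/2)))
    (C : ℝ) (hC : 1 < C) :
    ∃ c : ℝ, 0 < c ∧
      ∀ ζ : EuclideanSpace ℝ (Fin N), 2 * π * R * ‖ζ‖ ≤ C →
        ∀ r : ℝ, 1 ≤ r → r ≤ 2 →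
          ‖sphereFT N R (r • ζ)‖ ≤ Real.exp (-c * (2 * π * R * ‖ζ‖) ^ 2) :=
  sphereFT_gaussian_bound_general N hN R hR C hC
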